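/- Let M₁ = [[a₁,b₁],[c₁,d₁]] and M₂ = [[a₂,b₂],[c₂,d₂]] be hyperbolic matrices in SL(2,ℝ), and for i = 1,2 let ℓ_{Mᵢ} = {z ∈ ℂ : Im z > 0 and cᵢ|z|² + (dᵢ−aᵢ)·Re z − bᵢ = 0} be the root geodesic of Mᵢ (the geodesic joining the two real fixed points of the Möbius transformation of Mᵢ). Then ℓ_{M₁} and ℓ_{M₂} intersect in exactly one point of the upper half-plane if and only if det(M₁M₂ − M₂M₁) > 0. -/

import Mathlib

/-!
Write `D = c₁m₂ - c₂m₁`, `X = b₂c₁ - b₁c₂`, `R = b₁m₂ - b₂m₁` for the coefficients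
`cᵢ = (Mᵢ)₁₀`, `mᵢ = (Mᵢ)₁₁ - (Mᵢ)₀₀`, `bᵢ = (Mᵢ)₀₁` of the two root geodesics. Eliminating
`|z|²` and `Re z` from the two equations shows that a common point satisfies `D·Re z = X` and
`D·|z|² = R`, hence `D²·(Im z)² = RD - X²`, and `RD - X²` is exactly `det(M₁M₂ - M₂M₁)`.
If `D ≠ 0` this determines at most one point, and one exists iff `RD - X² > 0`. If `D = 0`,
a common point forces `X = R = 0`, i.e. proportional coefficient triples, so the two geodesics
coincide; as `m₁² + 4b₁c₁ = tr(M₁)² - 4 > 0`, that geodesic is a genuine vertical line or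
semicircle, so they share more than one point.
-/

abbrev SL2R := Matrix.SpecialLinearGroup (Fin 2) ℝ

/-- The root geodesic of a hyperbolic `M = [[a,b],[c,d]] ∈ SL(2,ℝ)`: the set of
upper half plane points `z` with `c|z|² + (d-a)·Re z - b = 0` (the geodesic
joining the two real fixed points of the Möbius transformation of `M`). -/
def matRootGeodesic (M : SL2R) : Set ℂ :=
  {z : ℂ | 0 < z.im ∧
    (M.1 1 0) * Complex.normSq z + (M.1 1 1 - M.1 0 0) * z.re - M.1 0 1 = 0}

def halfPlaneCurve (c m b : ℝ) : Set ℂ :=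
  {z : ℂ | 0 < z.im ∧ c * Complex.normSq z + m * z.re - b = 0}

lemma matRootGeodesic_eq_halfPlaneCurve (M : SL2R) :
    matRootGeodesic M = halfPlaneCurve (M.1 1 0) (M.1 1 1 - M.1 0 0) (M.1 0 1) :=
  rfl

def curvePairDiscr {R : Type*} [CommRing R] (c₁ m₁ b₁ c₂ m₂ b₂ : R) : R :=
  (b₁ * m₂ - b₂ * m₁) * (c₁ * m₂ - c₂ * m₁) - (b₂ * c₁ - b₁ * c₂) ^ 2

lemma Complex.eq_of_re_eq_of_normSq_eq {z w : ℂ} (hz : 0 < z.im) (hw : 0 < w.im)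
    (hre : z.re = w.re) (hnormSq : Complex.normSq z = Complex.normSq w) : z = w := by
  have him_sq : z.im ^ 2 = w.im ^ 2 := by
    simp only [Complex.normSq_apply, hre] at hnormSq
    linear_combination hnormSq
  exact Complex.ext hre ((sq_eq_sq₀ hz.le hw.le).1 him_sq)

lemma halfPlaneCurve_nontrivial {c m b : ℝ} (hQ : 0 < m ^ 2 + 4 * b * c) :
    (halfPlaneCurve c m b).Nontrivial := by
  by_cases hc : c = 0
  · subst hc
    have hm : m ≠ 0 := by rintro rfl; simp at hQ
    have hmem : ∀ y : ℝ, 0 < y → (⟨b / m, y⟩ : ℂ) ∈ halfPlaneCurve 0 m b := fun y hy =>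
      ⟨hy, by simp [mul_div_cancel₀ _ hm]⟩
    exact ⟨_, hmem 1 one_pos, _, hmem 2 two_pos, fun h => by simpa using congrArg Complex.im h⟩
  · obtain ⟨x₀, hx₀⟩ : ∃ x₀ : ℝ, 2 * c * x₀ = -m := ⟨-m / (2 * c), by field_simp⟩
    set r := Real.sqrt ((m ^ 2 + 4 * b * c) / (4 * c ^ 2))
    have hr : 0 < r := Real.sqrt_pos.2 (by positivity)
    have hr_sq : 4 * c ^ 2 * r ^ 2 = m ^ 2 + 4 * b * c := by
      rw [Real.sq_sqrt (by positivity)]; field_simp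
    have hmem : ∀ u v : ℝ, u ^ 2 + v ^ 2 = 1 → 0 < v →
        (⟨x₀ + u * r, v * r⟩ : ℂ) ∈ halfPlaneCurve c m b := by
      intro u v huv hv
      refine ⟨mul_pos hv hr, mul_left_cancel₀ (mul_ne_zero four_ne_zero hc) ?_⟩
      simp only [Complex.normSq_mk]
      linear_combination (2 * c * x₀ + m + 4 * c * u * r) * hx₀ + (4 * c ^ 2 * r ^ 2) * huv + hr_sq
    refine ⟨_, hmem 0 1 (by norm_num) one_pos, _, hmem (3 / 5) (4 / 5) (by norm_num) (by norm_num),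
      fun h => ?_⟩
    have him := congrArg Complex.im h
    simp only at him
    linarith

lemma cross_ne_zero_of_curvePairDiscr_pos {c₁ m₁ b₁ c₂ m₂ b₂ : ℝ}
    (hΔ : 0 < curvePairDiscr c₁ m₁ b₁ c₂ m₂ b₂) :
    c₁ * m₂ - c₂ * m₁ ≠ 0 := by
  intro hD
  rw [curvePairDiscr, hD, mul_zero, zero_sub, neg_pos] at hΔ
  exact (sq_nonneg _).not_gt hΔ

namespace halfPlaneCurve

variable {c₁ m₁ b₁ c₂ m₂ b₂ : ℝ} {z : ℂ}

lemma cross_mul_re_eq (h₁ : z ∈ halfPlaneCurve c₁ m₁ b₁) (h₂ : z ∈ halfPlaneCurve c₂ m₂ b₂) :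
    (c₁ * m₂ - c₂ * m₁) * z.re = b₂ * c₁ - b₁ * c₂ := by
  linear_combination c₁ * h₂.2 - c₂ * h₁.2

lemma cross_mul_normSq_eq (h₁ : z ∈ halfPlaneCurve c₁ m₁ b₁) (h₂ : z ∈ halfPlaneCurve c₂ m₂ b₂) :
    (c₁ * m₂ - c₂ * m₁) * Complex.normSq z = b₁ * m₂ - b₂ * m₁ := by
  linear_combination m₂ * h₁.2 - m₁ * h₂.2

lemma cross_sq_mul_im_sq_eq (h₁ : z ∈ halfPlaneCurve c₁ m₁ b₁)
    (h₂ : z ∈ halfPlaneCurve c₂ m₂ b₂) :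
    (c₁ * m₂ - c₂ * m₁) ^ 2 * z.im ^ 2 = curvePairDiscr c₁ m₁ b₁ c₂ m₂ b₂ := by
  have hre := cross_mul_re_eq h₁ h₂
  have hnormSq := cross_mul_normSq_eq h₁ h₂
  rw [Complex.normSq_apply] at hnormSq
  unfold curvePairDiscr
  linear_combination (c₁ * m₂ - c₂ * m₁) * hnormSq
    - ((c₁ * m₂ - c₂ * m₁) * z.re + (b₂ * c₁ - b₁ * c₂)) * hre

lemma mem_inter_of_cross_ne_zero (hD : c₁ * m₂ - c₂ * m₁ ≠ 0) (hz : 0 < z.im)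
    (hre : (c₁ * m₂ - c₂ * m₁) * z.re = b₂ * c₁ - b₁ * c₂)
    (hnormSq : (c₁ * m₂ - c₂ * m₁) * Complex.normSq z = b₁ * m₂ - b₂ * m₁) :
    z ∈ halfPlaneCurve c₁ m₁ b₁ ∧ z ∈ halfPlaneCurve c₂ m₂ b₂ := by
  refine ⟨⟨hz, mul_left_cancel₀ hD ?_⟩, hz, mul_left_cancel₀ hD ?_⟩
  · linear_combination c₁ * hnormSq + m₁ * hre
  · linear_combination c₂ * hnormSq + m₂ * hre

lemma exists_mem_inter_of_curvePairDiscr_pos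
    (hΔ : 0 < curvePairDiscr c₁ m₁ b₁ c₂ m₂ b₂) :
    ∃ z, z ∈ halfPlaneCurve c₁ m₁ b₁ ∧ z ∈ halfPlaneCurve c₂ m₂ b₂ := by
  have hD := cross_ne_zero_of_curvePairDiscr_pos hΔ
  refine ⟨⟨(b₂ * c₁ - b₁ * c₂) / (c₁ * m₂ - c₂ * m₁),
      Real.sqrt (curvePairDiscr c₁ m₁ b₁ c₂ m₂ b₂) / |c₁ * m₂ - c₂ * m₁|⟩,
    mem_inter_of_cross_ne_zero hD (div_pos (Real.sqrt_pos.2 hΔ) (abs_pos.2 hD))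
      (mul_div_cancel₀ _ hD) ?_⟩
  rw [Complex.normSq_mk, ← sq, ← sq, div_pow, div_pow, Real.sq_sqrt hΔ.le, sq_abs]
  field_simp
  rw [curvePairDiscr]
  ring

lemma subset_of_cross_eq_zero (hne : c₁ ≠ 0 ∨ m₁ ≠ 0 ∨ b₁ ≠ 0)
    (hD : c₁ * m₂ - c₂ * m₁ = 0) (hX : b₂ * c₁ - b₁ * c₂ = 0) (hR : b₁ * m₂ - b₂ * m₁ = 0) :
    halfPlaneCurve c₁ m₁ b₁ ⊆ halfPlaneCurve c₂ m₂ b₂ := by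
  rintro z ⟨hz, h⟩
  refine ⟨hz, ?_⟩
  rcases hne with hc | hm | hb
  · exact (mul_eq_zero.1 (by linear_combination c₂ * h + z.re * hD - hX)).resolve_left hc
  · exact (mul_eq_zero.1
      (by linear_combination m₂ * h - Complex.normSq z * hD + hR)).resolve_left hm
  · exact (mul_eq_zero.1
      (by linear_combination b₂ * h - Complex.normSq z * hX + z.re * hR)).resolve_left hb

theorem existsUnique_mem_inter_iff (hQ₁ : 0 < m₁ ^ 2 + 4 * b₁ * c₁) :
    (∃! z, z ∈ halfPlaneCurve c₁ m₁ b₁ ∧ z ∈ halfPlaneCurve c₂ m₂ b₂) ↔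
      0 < curvePairDiscr c₁ m₁ b₁ c₂ m₂ b₂ := by
  constructor
  · rintro ⟨z, ⟨h₁, h₂⟩, huniq⟩
    by_contra hΔ
    have hD : c₁ * m₂ - c₂ * m₁ = 0 := by
      by_contra hD
      exact hΔ (cross_sq_mul_im_sq_eq h₁ h₂ ▸ mul_pos (sq_pos_of_ne_zero hD) (pow_pos h₁.1 2))
    have hne : c₁ ≠ 0 ∨ m₁ ≠ 0 ∨ b₁ ≠ 0 := by
      by_contra! h
      simp [h.1, h.2.1] at hQ₁
    have hsub := subset_of_cross_eq_zero hne hD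
      (by rw [← cross_mul_re_eq h₁ h₂, hD, zero_mul])
      (by rw [← cross_mul_normSq_eq h₁ h₂, hD, zero_mul])
    obtain ⟨p, hp, q, hq, hpq⟩ := halfPlaneCurve_nontrivial hQ₁
    exact hpq ((huniq p ⟨hp, hsub hp⟩).trans (huniq q ⟨hq, hsub hq⟩).symm)
  · intro hΔ
    have hD := cross_ne_zero_of_curvePairDiscr_pos hΔ
    obtain ⟨z, hz₁, hz₂⟩ := exists_mem_inter_of_curvePairDiscr_pos hΔ
    refine ⟨z, ⟨hz₁, hz₂⟩, fun w ⟨hw₁, hw₂⟩ => Complex.eq_of_re_eq_of_normSq_eq hw₁.1 hz₁.1 ?_ ?_⟩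
    · exact mul_left_cancel₀ hD ((cross_mul_re_eq hw₁ hw₂).trans (cross_mul_re_eq hz₁ hz₂).symm)
    · exact mul_left_cancel₀ hD
        ((cross_mul_normSq_eq hw₁ hw₂).trans (cross_mul_normSq_eq hz₁ hz₂).symm)

end halfPlaneCurve

lemma Matrix.trace_sq_sub_four_mul_det_fin_two {R : Type*} [CommRing R]
    (A : Matrix (Fin 2) (Fin 2) R) :
    A.trace ^ 2 - 4 * A.det = (A 1 1 - A 0 0) ^ 2 + 4 * A 0 1 * A 1 0 := by
  rw [Matrix.trace_fin_two, Matrix.det_fin_two]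
  ring

lemma Matrix.det_commutator_fin_two {R : Type*} [CommRing R] (A B : Matrix (Fin 2) (Fin 2) R) :
    (A * B - B * A).det =
      curvePairDiscr (A 1 0) (A 1 1 - A 0 0) (A 0 1) (B 1 0) (B 1 1 - B 0 0) (B 0 1) := by
  simp only [Matrix.det_fin_two, Matrix.sub_apply, Matrix.mul_apply, Fin.sum_univ_two,
    curvePairDiscr]
  ring

lemma sub_sq_add_four_mul_pos_of_two_lt_abs_trace (M : SL2R)
    (h : 2 < |Matrix.trace (M : Matrix (Fin 2) (Fin 2) ℝ)|) :
    0 < (M.1 1 1 - M.1 0 0) ^ 2 + 4 * M.1 0 1 * M.1 1 0 := by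
  have h4 : 2 ^ 2 < Matrix.trace (M : Matrix (Fin 2) (Fin 2) ℝ) ^ 2 := by
    rwa [sq_lt_sq, abs_two]
  rw [← Matrix.trace_sq_sub_four_mul_det_fin_two, M.det_coe]
  linarith

theorem matRootGeodesics_unique_intersection_iff_det_pos_general
    (M₁ M₂ : SL2R)
    (h₁ : 2 < |Matrix.trace (M₁ : Matrix (Fin 2) (Fin 2) ℝ)|) :
    (∃! z : ℂ, z ∈ matRootGeodesic M₁ ∧ z ∈ matRootGeodesic M₂) ↔
      0 < ((M₁ : Matrix (Fin 2) (Fin 2) ℝ) * (M₂ : Matrix (Fin 2) (Fin 2) ℝ)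
            - (M₂ : Matrix (Fin 2) (Fin 2) ℝ) * (M₁ : Matrix (Fin 2) (Fin 2) ℝ)).det := by
  rw [matRootGeodesic_eq_halfPlaneCurve, matRootGeodesic_eq_halfPlaneCurve,
    halfPlaneCurve.existsUnique_mem_inter_iff (sub_sq_add_four_mul_pos_of_two_lt_abs_trace M₁ h₁),
    Matrix.det_commutator_fin_two]

/-- Proposition 6(i) of the paper.
The root geodesics of two hyperbolic matrices `M₁, M₂ ∈ SL(2,ℝ)` intersect in
exactly one point of the upper half plane iff `det(M₁M₂ - M₂M₁) > 0`. -/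
theorem matRootGeodesics_unique_intersection_iff_det_pos
    (M₁ M₂ : SL2R)
    (h₁ : 2 < |Matrix.trace (M₁ : Matrix (Fin 2) (Fin 2) ℝ)|)
    (h₂ : 2 < |Matrix.trace (M₂ : Matrix (Fin 2) (Fin 2) ℝ)|) :
    (∃! z : ℂ, z ∈ matRootGeodesic M₁ ∧ z ∈ matRootGeodesic M₂) ↔
      0 < ((M₁ : Matrix (Fin 2) (Fin 2) ℝ) * (M₂ : Matrix (Fin 2) (Fin 2) ℝ)
            - (M₂ : Matrix (Fin 2) (Fin 2) ℝ) * (M₁ : Matrix (Fin 2) (Fin 2) ℝ)).det :=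
  matRootGeodesics_unique_intersection_iff_det_pos_general M₁ M₂ h₁
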